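/- For multisegments, if ε_i(M) + ε_i*(M) + ⟨wt(M), α_i^∨⟩ ≥ 2, then f_i(f_i*(M)) = f_i*(f_i(M)). -/

import Mathlib

/-- A segment `[a,b]` is a pair of integers. -/
abbrev Seg : Type := ℕ × ℕ

/-- A multisegment is a finite multiset of segments. -/
abbrev MS : Type := Multiset Seg

/-- `M ∈ MS_n`: all segments `[a,b]` satisfy `1 ≤ a ≤ b ≤ n`. -/
def IsMS (n : ℕ) (M : MS) : Prop := ∀ s ∈ M, 1 ≤ s.1 ∧ s.1 ≤ s.2 ∧ s.2 ≤ n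

/-- A bracket: `op` = "(", `cl` = ")". -/
inductive Br | op | cl
deriving DecidableEq

/-- One step of the left-to-right bracket cancellation procedure.  The state
`(cls, ops)` records the tags of the currently uncanceled ")" (in order) and the
currently uncanceled "(" (in order).  A new "(" is appended to `ops`; a new ")"
cancels the last uncanceled "(" if there is one, and otherwise is appended to `cls`. -/
def step {τ : Type} : (List τ × List τ) → (Br × τ) → (List τ × List τ)
  | (cls, ops), (Br.op, s) => (cls, ops ++ [s])
  | (cls, ops), (Br.cl, s) => if ops.isEmpty then (cls ++ [s], ops) else (cls, ops.dropLast)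

/-- Process a tagged bracket string; the result `(cls, ops)` lists the tags of the
uncanceled ")" and the uncanceled "(" (left to right).  The reduced (uncanceled)
string is `")"^cls.length ++ "("^ops.length`. -/
def scan {τ : Type} (l : List (Br × τ)) : List τ × List τ := l.foldl step ([], [])

/-- Number of uncanceled ")" in a tagged bracket string. -/
def urStr {τ : Type} (l : List (Br × τ)) : ℕ := (scan l).1.length

/-- Number of uncanceled "(" in a tagged bracket string. -/
def epsStr {τ : Type} (l : List (Br × τ)) : ℕ := (scan l).2.length

/-- Tag of the rightmost uncanceled ")", if any. -/
def lastCl {τ : Type} (l : List (Br × τ)) : Option τ := (scan l).1.getLast?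

/-- Tag of the leftmost uncanceled "(", if any. -/
def headOp {τ : Type} (l : List (Br × τ)) : Option τ := (scan l).2.head?

/-- The string `S_i(M)`: segments are ordered by increasing height, then by
decreasing lower endpoint; each `[h,i]` contributes "(" and each `[h,i-1]`
contributes ")".  In the block of segments of height `t` the "(" over the
`[i-t+1, i]` segments come immediately before the ")" over the `[i-t, i-1]`
segments, and blocks appear for `t = 1, 2, …`. -/
def Si (M : MS) (i : ℕ) : List (Br × Seg) :=
  (List.range i).flatMap fun t0 =>
    let t := t0 + 1
    List.replicate (M.count (i - t + 1, i)) (Br.op, ((i - t + 1 : ℕ), i)) ++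
    List.replicate (M.count (i - t, i - 1)) (Br.cl, ((i - t : ℕ), i - 1))

/-- The string `S_i^*(M)`: segments ordered by increasing height, then by
increasing lower endpoint; each `[i,j]` contributes "(" and each `[i+1,j]`
contributes ")".  In the block of height `t` the "(" below the `[i, i+t-1]`
segments come immediately before the ")" below the `[i+1, i+t]` segments. -/
def SiStar (n : ℕ) (M : MS) (i : ℕ) : List (Br × Seg) :=
  (List.range n).flatMap fun t0 =>
    let t := t0 + 1
    List.replicate (M.count (i, i + t - 1)) (Br.op, (i, i + t - 1)) ++
    List.replicate (M.count (i + 1, i + t)) (Br.cl, (i + 1, i + t))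

/-- The crystal operator `f_i` on multisegments: it changes the segment `[h,i-1]`
under the rightmost uncanceled ")" of `S_i(M)` into `[h,i]`, or adds a new
segment `[i,i]` if there is no uncanceled ")". -/
def fM (i : ℕ) (M : MS) : MS :=
  match lastCl (Si M i) with
  | some s => M.erase s + {(s.1, i)}
  | none => M + {(i, i)}

/-- The crystal operator `e_i` on multisegments: it changes the segment `[h,i]`
under the leftmost uncanceled "(" of `S_i(M)` into `[h,i-1]` (deleting it when
`h = i`), or returns `none` (i.e. `0`) if there is no uncanceled "(". -/
def eM (i : ℕ) (M : MS) : Option MS :=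
  match headOp (Si M i) with
  | some s => some (if s.1 = i then M.erase s else M.erase s + {(s.1, i - 1)})
  | none => none

/-- The operator `f_i^*`: it changes the segment `[i+1,j]` under the rightmost
uncanceled ")" of `S_i^*(M)` into `[i,j]`, or adds `[i,i]` if there is none. -/
def fMStar (n i : ℕ) (M : MS) : MS :=
  match lastCl (SiStar n M i) with
  | some s => M.erase s + {(i, s.2)}
  | none => M + {(i, i)}

/-- The operator `e_i^*`: it changes the segment `[i,j]` under the leftmost
uncanceled "(" of `S_i^*(M)` into `[i+1,j]` (deleting it when `j = i`), or
returns `none` if there is no uncanceled "(". -/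
def eMStar (n i : ℕ) (M : MS) : Option MS :=
  match headOp (SiStar n M i) with
  | some s => some (if s.2 = i then M.erase s else M.erase s + {(i + 1, s.2)})
  | none => none

/-- The number of boxes labeled `j` in `M`: each segment `[a,b]` contains one
box labeled `j` for each `a ≤ j ≤ b`. -/
def boxes (M : MS) (j : ℕ) : ℕ :=
  (M.filter (fun s => s.1 ≤ j ∧ j ≤ s.2)).card

/-- The pairing `⟨wt(M), α_i^∨⟩ = #(boxes i-1) + #(boxes i+1) - 2 #(boxes i)`. -/
def wtPair (M : MS) (i : ℕ) : ℤ :=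
  (boxes M (i - 1) : ℤ) + (boxes M (i + 1) : ℤ) - 2 * (boxes M i : ℤ)

/-!
Let `φ_i`, `φ_i^*` be the numbers of uncancelled ")" in `S_i(M)` and `S_i^*(M)`. Counting brackets
gives `ε_i + ε_i^* + ⟨wt(M), α_i^∨⟩ = φ_i + φ_i^*`, so the hypothesis says `φ_i + φ_i^* ≥ 2`.
A move of `f_i` (`[h,i-1] ↦ [h,i]` with `h < i`) is invisible to `S_i^*`, which only sees segments
starting at `i` or `i+1`, and a move of `f_i^*` (`[i+1,j] ↦ [i,j]`) is invisible to `S_i`, which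
only sees segments ending at `i-1` or `i`. If instead one operator adds `[i,i]`, the other string
gains a "(" in front, which cancels only its first uncancelled ")"; that string then has at least
two of them, so its last one survives. Either way each operator acts on the same segment before
and after the other, and the two changes commute.
-/

section Brackets

variable {τ : Type}

lemma scan_append_singleton (l : List (Br × τ)) (p : Br × τ) :
    scan (l ++ [p]) = step (scan l) p :=
  List.foldl_concat _ _ _ _

lemma foldl_step_fst (l : List (Br × τ)) (c o : List τ) :
    (l.foldl step (c, o)).1 = c ++ (scan l).1.drop o.length := by
  induction l generalizing c o with
  | nil => simp [scan]
  | cons p l ih =>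
    obtain ⟨_ | _, s⟩ := p
    · show (l.foldl step (c, o ++ [s])).1 = c ++ (l.foldl step ([], [s])).1.drop o.length
      rw [ih, ih]
      simp
    · cases o with
      | nil =>
        show (l.foldl step (c ++ [s], [])).1 = c ++ (l.foldl step ([s], [])).1.drop 0
        rw [ih, ih]
        simp
      | cons y o =>
        show (l.foldl step (c, (y :: o).dropLast)).1 =
          c ++ (l.foldl step ([s], [])).1.drop (o.length + 1)
        rw [ih, ih]
        simp

lemma scan_cons_op_fst (x : τ) (l : List (Br × τ)) :
    (scan ((Br.op, x) :: l)).1 = (scan l).1.tail := by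
  show (l.foldl step ([], [x])).1 = _
  rw [foldl_step_fst]
  simp

lemma lastCl_cons_op (x : τ) (l : List (Br × τ)) (h : urStr l ≠ 1) :
    lastCl ((Br.op, x) :: l) = lastCl l := by
  unfold lastCl
  unfold urStr at h
  rw [scan_cons_op_fst]
  generalize (scan l).1 = A at h ⊢
  rcases A with _ | ⟨a, _ | ⟨b, t⟩⟩ <;> simp_all [List.getLast?_cons_cons]

lemma mem_of_mem_scan_fst {l : List (Br × τ)} {x : τ} (hx : x ∈ (scan l).1) :
    (Br.cl, x) ∈ l := by
  induction l using List.reverseRecOn with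
  | nil => simp [scan] at hx
  | append_singleton l p ih =>
    rw [scan_append_singleton] at hx
    generalize scan l = S at hx ih
    obtain ⟨A, B⟩ := S
    obtain ⟨_ | _, s⟩ := p
    · exact List.mem_append_left _ (ih hx)
    · cases B <;> simp [step] at hx ih ⊢ <;> grind

lemma mem_of_lastCl_eq_some {l : List (Br × τ)} {x : τ} (h : lastCl l = some x) :
    (Br.cl, x) ∈ l :=
  mem_of_mem_scan_fst (List.mem_of_getLast? h)

lemma urStr_eq_zero_of_lastCl_eq_none {l : List (Br × τ)} (h : lastCl l = none) :
    urStr l = 0 := by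
  simpa [lastCl, urStr] using h

lemma epsStr_add_countP_cl (l : List (Br × τ)) :
    epsStr l + l.countP (·.1 == Br.cl) = urStr l + l.countP (·.1 == Br.op) := by
  induction l using List.reverseRecOn with
  | nil => simp [epsStr, urStr, scan]
  | append_singleton l p ih =>
    unfold epsStr urStr at ih ⊢
    rw [scan_append_singleton]
    generalize scan l = S at ih ⊢
    obtain ⟨A, B⟩ := S
    obtain ⟨_ | _, s⟩ := p
    · simp [step] at ih ⊢
      omega
    · cases B <;> simp [step] at ih ⊢ <;> omega

end Brackets

lemma sum_count_comp_eq_countP {α : Type} [DecidableEq α] (M : Multiset α) {m : ℕ} {g : ℕ → α}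
    (hg : Set.InjOn g (Finset.range m)) {q : α → Prop} [DecidablePred q]
    (hq : ∀ a ∈ M, q a ↔ ∃ t < m, g t = a) :
    ∑ t ∈ Finset.range m, M.count (g t) = M.countP q := by
  rw [← Finset.sum_image (f := (M.count ·)) hg]
  replace hq : ∀ a ∈ M, q a ↔ a ∈ (Finset.range m).image g := by simpa using hq
  induction M using Multiset.induction_on with
  | empty => simp
  | cons a M ih =>
    rw [Multiset.countP_cons, ← ih fun b hb => hq b (Multiset.mem_cons_of_mem hb)]
    simp [Multiset.count_cons, Finset.sum_add_distrib, hq a (Multiset.mem_cons_self a M)]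

lemma erase_add_singleton_of_ne {α : Type} [DecidableEq α] {a b : α} (h : a ≠ b)
    (M : Multiset α) : (M + {b}).erase a = M.erase a + {b} :=
  Multiset.erase_add_left_neg M (by simpa using h)

section BlockString

variable {α : Type} [DecidableEq α]

/-- The common shape of `Si` and `SiStar`. -/
def blockString (M : Multiset α) (m : ℕ) (o c : ℕ → α) : List (Br × α) :=
  (List.range m).flatMap fun t =>
    List.replicate (M.count (o t)) (Br.op, o t) ++ List.replicate (M.count (c t)) (Br.cl, c t)

lemma mem_blockString_cl {M : Multiset α} {m : ℕ} {o c : ℕ → α} {x : α} (h : (Br.cl, x) ∈ blockString M m o c) :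
    x ∈ M ∧ ∃ t < m, c t = x := by
  simp only [blockString, List.mem_flatMap, List.mem_range, List.mem_append,
    List.mem_replicate] at h
  obtain ⟨t, ht, ⟨-, h⟩ | ⟨hx, h⟩⟩ := h
  · cases h
  · cases h
    exact ⟨Multiset.count_ne_zero.mp hx, t, ht, rfl⟩

variable (M : Multiset α) (m : ℕ) (o c : ℕ → α)

lemma countP_op_blockString :
    (blockString M m o c).countP (·.1 == Br.op) = ∑ t ∈ Finset.range m, M.count (o t) := by
  induction m with
  | zero => rfl
  | succ m ih =>
    rw [blockString, List.range_succ, List.flatMap_append, List.countP_append, ← blockString, ih,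
      Finset.sum_range_succ]
    simp [List.countP_replicate]

lemma countP_cl_blockString :
    (blockString M m o c).countP (·.1 == Br.cl) = ∑ t ∈ Finset.range m, M.count (c t) := by
  induction m with
  | zero => rfl
  | succ m ih =>
    rw [blockString, List.range_succ, List.flatMap_append, List.countP_append, ← blockString, ih,
      Finset.sum_range_succ]
    simp [List.countP_replicate]

lemma blockString_erase_add {x y : α} (hx : ∀ t < m, o t ≠ x ∧ c t ≠ x)
    (hy : ∀ t < m, o t ≠ y ∧ c t ≠ y) :
    blockString (M.erase x + {y}) m o c = blockString M m o c := by
  refine List.flatMap_congr fun t ht => ?_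
  have ht : t < m := List.mem_range.mp ht
  simp only [Multiset.count_add, Multiset.count_singleton, Multiset.count_erase_of_ne,
    (hx t ht).1, (hx t ht).2, (hy t ht).1, (hy t ht).2, ne_eq, not_false_eq_true, if_false, add_zero]

lemma blockString_add_singleton {x : α} (hm : 0 < m) (h0 : o 0 = x)
    (ho : ∀ t, 0 < t → t < m → o t ≠ x) (hc : ∀ t < m, c t ≠ x) :
    blockString (M + {x}) m o c = (Br.op, x) :: blockString M m o c := by
  obtain ⟨k, rfl⟩ := Nat.exists_eq_add_of_lt hm
  subst h0
  simp only [blockString, zero_add, List.range_succ_eq_map, List.flatMap_cons, List.flatMap_map]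
  have hrest : ∀ t ∈ List.range k, (M + {o 0}).count (o t.succ) = M.count (o t.succ) ∧
      (M + {o 0}).count (c t.succ) = M.count (c t.succ) := fun t ht => by
    have ht : t < k := List.mem_range.mp ht
    simp [ho (t + 1) t.succ_pos (by omega), hc (t + 1) (by omega)]
  rw [List.flatMap_congr fun t ht => by rw [(hrest t ht).1, (hrest t ht).2]]
  simp [hc 0 hm, List.replicate_succ]

end BlockString

section Strings

variable {n i : ℕ} {M : MS}

lemma Si_eq_blockString (M : MS) (i : ℕ) :
    Si M i = blockString M i (fun t => (i - (t + 1) + 1, i)) (fun t => (i - (t + 1), i - 1)) :=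
  rfl

lemma SiStar_eq_blockString (n : ℕ) (M : MS) (i : ℕ) :
    SiStar n M i = blockString M n (fun t => (i, i + (t + 1) - 1)) (fun t => (i + 1, i + (t + 1))) :=
  rfl

lemma countP_op_Si (hM : IsMS n M) : (Si M i).countP (·.1 == Br.op) = M.countP (·.2 = i) := by
  rw [Si_eq_blockString, countP_op_blockString]
  refine sum_count_comp_eq_countP M (fun t ht t' ht' h => ?_) fun a ha => ⟨fun h => ?_, ?_⟩
  · simp only [Finset.coe_range, Set.mem_Iio, Prod.mk.injEq] at ht ht' h
    omega
  · have := hM a ha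
    exact ⟨i - a.1, by omega, Prod.ext (by simp; omega) h.symm⟩
  · rintro ⟨t, -, rfl⟩
    rfl

lemma countP_cl_Si (hM : IsMS n M) : (Si M i).countP (·.1 == Br.cl) = M.countP (·.2 = i - 1) := by
  rw [Si_eq_blockString, countP_cl_blockString]
  refine sum_count_comp_eq_countP M (fun t ht t' ht' h => ?_) fun a ha => ⟨fun h => ?_, ?_⟩
  · simp only [Finset.coe_range, Set.mem_Iio, Prod.mk.injEq] at ht ht' h
    omega
  · have := hM a ha
    exact ⟨i - 1 - a.1, by omega, Prod.ext (by simp; omega) h.symm⟩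
  · rintro ⟨t, -, rfl⟩
    rfl

lemma countP_op_SiStar (hM : IsMS n M) :
    (SiStar n M i).countP (·.1 == Br.op) = M.countP (·.1 = i) := by
  rw [SiStar_eq_blockString, countP_op_blockString]
  refine sum_count_comp_eq_countP M (fun t ht t' ht' h => ?_) fun a ha => ⟨fun h => ?_, ?_⟩
  · simp only [Finset.coe_range, Set.mem_Iio, Prod.mk.injEq] at ht ht' h
    omega
  · have := hM a ha
    exact ⟨a.2 - i, by omega, Prod.ext h.symm (by simp; omega)⟩
  · rintro ⟨t, -, rfl⟩
    rfl

lemma countP_cl_SiStar (hM : IsMS n M) :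
    (SiStar n M i).countP (·.1 == Br.cl) = M.countP (·.1 = i + 1) := by
  rw [SiStar_eq_blockString, countP_cl_blockString]
  refine sum_count_comp_eq_countP M (fun t ht t' ht' h => ?_) fun a ha => ⟨fun h => ?_, ?_⟩
  · simp only [Finset.coe_range, Set.mem_Iio, Prod.mk.injEq] at ht ht' h
    omega
  · have := hM a ha
    exact ⟨a.2 - i - 1, by omega, Prod.ext h.symm (by simp; omega)⟩
  · rintro ⟨t, -, rfl⟩
    rfl

end Strings

section Operators

variable {n i : ℕ} {M : MS}

lemma wtPair_eq (hM : IsMS n M) :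
    wtPair M i = (M.countP (·.2 = i - 1) + M.countP (·.1 = i + 1) : ℤ) -
      M.countP (·.1 = i) - M.countP (·.2 = i) := by
  unfold wtPair boxes
  induction M using Multiset.induction_on with
  | empty => simp
  | cons a M ih =>
    have ha := hM a (Multiset.mem_cons_self a M)
    have ih := ih fun s hs => hM s (Multiset.mem_cons_of_mem hs)
    simp only [Multiset.filter_cons, Multiset.countP_cons, Multiset.card_add,
      apply_ite Multiset.card, Multiset.card_singleton, Multiset.card_zero] at ih ⊢
    push_cast at ih ⊢
    split_ifs <;> omega

/-- In each string, `ε - #(uncancelled ")") = #"(" - #")"`; these four letter counts add up to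
`-⟨wt(M), α_i^∨⟩`. -/
lemma urStr_Si_add_urStr_SiStar (hM : IsMS n M) :
    (urStr (Si M i) + urStr (SiStar n M i) : ℤ) =
      epsStr (Si M i) + epsStr (SiStar n M i) + wtPair M i := by
  have h := epsStr_add_countP_cl (Si M i)
  have hStar := epsStr_add_countP_cl (SiStar n M i)
  rw [countP_op_Si hM, countP_cl_Si hM] at h
  rw [countP_op_SiStar hM, countP_cl_SiStar hM] at hStar
  rw [wtPair_eq hM]
  omega

lemma Si_add_diag (hi : 1 ≤ i) (M : MS) : Si (M + {(i, i)}) i = (Br.op, (i, i)) :: Si M i := by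
  rw [Si_eq_blockString, Si_eq_blockString, blockString_add_singleton]
  all_goals grind

lemma SiStar_add_diag (hn : 1 ≤ n) (M : MS) :
    SiStar n (M + {(i, i)}) i = (Br.op, (i, i)) :: SiStar n M i := by
  rw [SiStar_eq_blockString, SiStar_eq_blockString, blockString_add_singleton]
  all_goals grind

lemma Si_erase_add {x y : Seg} (hx : x.2 ≠ i ∧ x.2 ≠ i - 1) (hy : y.2 ≠ i ∧ y.2 ≠ i - 1) :
    Si (M.erase x + {y}) i = Si M i := by
  rw [Si_eq_blockString, Si_eq_blockString, blockString_erase_add]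
  all_goals grind

lemma SiStar_erase_add {x y : Seg} (hx : x.1 ≠ i ∧ x.1 ≠ i + 1) (hy : y.1 ≠ i ∧ y.1 ≠ i + 1) :
    SiStar n (M.erase x + {y}) i = SiStar n M i := by
  rw [SiStar_eq_blockString, SiStar_eq_blockString, blockString_erase_add]
  all_goals grind

lemma lastCl_Si_eq_some {x : Seg} (h : lastCl (Si M i) = some x) : x ∈ M ∧ x.2 = i - 1 := by
  obtain ⟨hx, t, -, rfl⟩ := mem_blockString_cl (mem_of_lastCl_eq_some h)
  exact ⟨hx, rfl⟩

lemma lastCl_SiStar_eq_some {x : Seg} (h : lastCl (SiStar n M i) = some x) :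
    x ∈ M ∧ x.1 = i + 1 := by
  obtain ⟨hx, t, -, rfl⟩ := mem_blockString_cl (mem_of_lastCl_eq_some h)
  exact ⟨hx, rfl⟩

lemma lastCl_Si_fMStar (hi : 1 ≤ i) (hM : IsMS n M)
    (hur : 2 ≤ urStr (Si M i) + urStr (SiStar n M i)) :
    lastCl (Si (fMStar n i M) i) = lastCl (Si M i) := by
  rcases hy : lastCl (SiStar n M i) with _ | y
  · have := urStr_eq_zero_of_lastCl_eq_none hy
    rw [fMStar, hy, Si_add_diag hi, lastCl_cons_op _ _ (by omega)]
  · obtain ⟨hyM, hy1⟩ := lastCl_SiStar_eq_some hy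
    have := hM y hyM
    rw [fMStar, hy, Si_erase_add] <;> omega

lemma lastCl_SiStar_fM (hn : 1 ≤ n) (hM : IsMS n M)
    (hur : 2 ≤ urStr (Si M i) + urStr (SiStar n M i)) :
    lastCl (SiStar n (fM i M) i) = lastCl (SiStar n M i) := by
  rcases hx : lastCl (Si M i) with _ | x
  · have := urStr_eq_zero_of_lastCl_eq_none hx
    rw [fM, hx, SiStar_add_diag hn, lastCl_cons_op _ _ (by omega)]
  · obtain ⟨hxM, hx2⟩ := lastCl_Si_eq_some hx
    have := hM x hxM
    rw [fM, hx, SiStar_erase_add] <;> omega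

end Operators

theorem stmt11 (n i : ℕ) (hi : 1 ≤ i) (hin : i ≤ n) (M : MS) (hM : IsMS n M)
    (h : 2 ≤ (epsStr (Si M i) : ℤ) + (epsStr (SiStar n M i) : ℤ) + wtPair M i) :
    fM i (fMStar n i M) = fMStar n i (fM i M) := by
  have hur : 2 ≤ urStr (Si M i) + urStr (SiStar n M i) := by
    have := urStr_Si_add_urStr_SiStar (i := i) hM
    omega
  conv_lhs => rw [fM, lastCl_Si_fMStar hi hM hur]
  conv_rhs => rw [fMStar, lastCl_SiStar_fM (by omega) hM hur]
  rcases hx : lastCl (Si M i) with _ | x <;> rcases hy : lastCl (SiStar n M i) with _ | y <;>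
    simp only [fM, fMStar, hx, hy]
  · have hy1 := (lastCl_SiStar_eq_some hy).2
    rw [erase_add_singleton_of_ne (by grind), add_right_comm]
  · have hx2 := (lastCl_Si_eq_some hx).2
    rw [erase_add_singleton_of_ne (by grind), add_right_comm]
  · obtain ⟨hxM, hx2⟩ := lastCl_Si_eq_some hx
    obtain ⟨hyM, hy1⟩ := lastCl_SiStar_eq_some hy
    have := hM x hxM
    have := hM y hyM
    rw [erase_add_singleton_of_ne (by grind), erase_add_singleton_of_ne (by grind),
      Multiset.erase_comm, add_right_comm]
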